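/- arXiv:0806.3298 — 2 statements merged into one kernel-verified Lean document; each statement's English description precedes it below -/
import Mathlib

section
/- Let X be a scheme such that for every affine open subset U ⊆ X the ring of sections Γ(U, O_X) is seminormal. Then for every open subset U ⊆ X, the ring Γ(U, O_X) is seminormal. -/
open AlgebraicGeometry Opposite

/-- A commutative ring `A` is *seminormal* if it is reduced and for every pair of elements
`b, c ∈ A` with `b ^ 3 = c ^ 2` there is a unique `a ∈ A` with `a ^ 2 = b` and `a ^ 3 = c`
(Swan's intrinsic characterization). -/
def IsSeminormalRing (A : Type*) [CommRing A] : Prop :=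
  IsReduced A ∧ ∀ b c : A, b ^ 3 = c ^ 2 → ∃! a : A, a ^ 2 = b ∧ a ^ 3 = c

/-!
In a reduced ring the uniqueness clause of seminormality is automatic: if `a ^ 2 = b ^ 2` and
`a ^ 3 = b ^ 3` then `(a - b) ^ 3 = 4 (a ^ 3 - b ^ 3) = 0`. Reducedness is local, so `X` is a
reduced scheme. Given `b ^ 3 = c ^ 2` on an open `U`, cover `U` by affine opens and take the local
solutions there; on overlaps they have the same square and cube in a reduced ring, hence agree,
and glue to a solution on `U`.
-/

open CategoryTheory TopologicalSpace

theorem IsReduced.eq_of_sq_eq_of_pow_three_eq {R : Type*} [CommRing R] [IsReduced R] {a b : R}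
    (h2 : a ^ 2 = b ^ 2) (h3 : a ^ 3 = b ^ 3) : a = b := by
  have : (a - b) ^ 3 = 0 := by linear_combination (-3 * a - 3 * b) * h2 + 4 * h3
  exact sub_eq_zero.mp (IsReduced.eq_zero _ ⟨3, this⟩)

theorem isSeminormalRing_iff {A : Type*} [CommRing A] :
    IsSeminormalRing A ↔ IsReduced A ∧ ∀ b c : A, b ^ 3 = c ^ 2 → ∃ a : A, a ^ 2 = b ∧ a ^ 3 = c :=
  ⟨fun ⟨hA, h⟩ => ⟨hA, fun b c hbc => (h b c hbc).exists⟩, fun ⟨hA, h⟩ =>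
    ⟨hA, fun b c hbc => (h b c hbc).elim fun a ha => ⟨a, ha, fun _ ha' =>
      hA.eq_of_sq_eq_of_pow_three_eq (ha'.1.trans ha.1.symm) (ha'.2.trans ha.2.symm)⟩⟩⟩

namespace TopCat.Sheaf

universe u

variable {T : TopCat.{u}} (F : T.Sheaf CommRingCat.{u}) {ι : Type*} {U : Opens T} {V : ι → Opens T}

theorem isReduced_of_cover [∀ i, IsReduced (F.1.obj (op (V i)))] (hVU : ∀ i, V i ≤ U)
    (hcover : U ≤ iSup V) : IsReduced (F.1.obj (op U)) :=
  isReduced_of_injective (RingHom.pi fun i => (F.1.map (homOfLE (hVU i)).op).hom)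
    fun s t hst => F.eq_of_locally_eq' V U (fun i => homOfLE (hVU i)) hcover s t (congrFun hst)

theorem exists_sq_eq_and_pow_three_eq_of_cover
    [∀ i j, IsReduced (F.1.obj (op (V i ⊓ V j)))] (hVU : ∀ i, V i ≤ U) (hcover : U ≤ iSup V)
    (b c : F.1.obj (op U))
    (hloc : ∀ i, ∃ a, a ^ 2 = F.1.map (homOfLE (hVU i)).op b ∧
      a ^ 3 = F.1.map (homOfLE (hVU i)).op c) :
    ∃ a, a ^ 2 = b ∧ a ^ 3 = c := by
  choose a ha2 ha3 using hloc
  have restrict_inf (s : F.1.obj (op U)) (i j : ι) :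
      F.1.map (Opens.infLELeft (V i) (V j)).op (F.1.map (homOfLE (hVU i)).op s) =
        F.1.map (Opens.infLERight (V i) (V j)).op (F.1.map (homOfLE (hVU j)).op s) := by
    rw [← CommRingCat.comp_apply, ← CommRingCat.comp_apply, ← F.1.map_comp, ← F.1.map_comp]
    rfl
  have compatible : Presheaf.IsCompatible F.1 V a := fun i j =>
    IsReduced.eq_of_sq_eq_of_pow_three_eq
      (by rw [← map_pow, ← map_pow, ha2, ha2, restrict_inf])
      (by rw [← map_pow, ← map_pow, ha3, ha3, restrict_inf])
  obtain ⟨s, hs, -⟩ := F.existsUnique_gluing' V U (fun i => homOfLE (hVU i)) hcover a compatible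
  refine ⟨s, ?_, ?_⟩ <;>
    refine F.eq_of_locally_eq' V U (fun i => homOfLE (hVU i)) hcover _ _ fun i => ?_
  · rw [map_pow, hs, ha2]
  · rw [map_pow, hs, ha3]

end TopCat.Sheaf

theorem AlgebraicGeometry.Scheme.isReduced_of_isAffineOpen (X : Scheme)
    (h : ∀ U : X.Opens, IsAffineOpen U → _root_.IsReduced Γ(X, U)) : IsReduced X where
  component_reduced U := by
    obtain ⟨Us, hUs, rfl⟩ := Opens.isBasis_iff_cover.mp X.isBasis_affineOpens U
    have (V : Us) : _root_.IsReduced (X.sheaf.1.obj (op V)) := h V (hUs V.2)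
    exact X.sheaf.isReduced_of_cover (fun V : Us => le_sSup V.2) (sSup_eq_iSup' Us).le

/-- If every affine open of a scheme `X` has seminormal ring of sections, then the ring of
sections over *any* open subset of `X` is seminormal. -/
theorem globalSectionsOfSeminormality (X : Scheme)
    (h : ∀ U : X.Opens, IsAffineOpen U → IsSeminormalRing (X.presheaf.obj (op U))) :
    ∀ U : X.Opens, IsSeminormalRing (X.presheaf.obj (op U)) := by
  have : IsReduced X := X.isReduced_of_isAffineOpen fun U hU => (h U hU).1
  intro U
  obtain ⟨Us, hUs, rfl⟩ := Opens.isBasis_iff_cover.mp X.isBasis_affineOpens U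
  refine isSeminormalRing_iff.mpr ⟨inferInstance, fun b c hbc => ?_⟩
  have (V W : Us) : _root_.IsReduced (X.sheaf.1.obj (op (V.1 ⊓ W))) :=
    inferInstanceAs (_root_.IsReduced Γ(X, _))
  refine X.sheaf.exists_sq_eq_and_pow_three_eq_of_cover (fun V : Us => le_sSup V.2)
    (sSup_eq_iSup' Us).le b c fun V => (isSeminormalRing_iff.mp (h V (hUs V.2))).2 _ _ ?_
  exact (map_pow _ b 3).symm.trans ((congrArg _ hbc).trans (map_pow _ c 2))
end

section
/- Let A ⊆ B be a finite integral extension of reduced Noetherian rings and fix a pair of relatively prime integers e > f > 1. Then the following are equivalent: (i) A is seminormal in B, i.e., every intermediate ring A ⊆ C ⊆ B for which the map Spec C → Spec A is bijective and, for each prime Q of C lying over P = Q ∩ A, the induced extension of residue fields κ(P) → κ(Q) is an isomorphism, satisfies C = A; (ii) every element b ∈ B with b^e ∈ A and b^f ∈ A lies in A. -/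
open IsLocalRing

/-- For an extension `A ≤ C` of subrings of `B` and a prime `Q` of `C` with `P = Q ∩ A`,
the induced map of residue fields `κ(P) →+* κ(Q)`. -/
noncomputable def residueFieldMapOfLE {B : Type*} [CommRing B] {A C : Subring B} (h : A ≤ C)
    (Q : PrimeSpectrum C) :
    ResidueField (Localization.AtPrime (Q.asIdeal.comap (Subring.inclusion h))) →+*
      ResidueField (Localization.AtPrime Q.asIdeal) :=
  letI := Localization.isLocalHom_localRingHom (Q.asIdeal.comap (Subring.inclusion h))
    Q.asIdeal (Subring.inclusion h) rfl
  ResidueField.map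
    (Localization.localRingHom (Q.asIdeal.comap (Subring.inclusion h)) Q.asIdeal
      (Subring.inclusion h) rfl)

/-- An extension `A ≤ C` of subrings of `B` is *subintegral* if `Spec C → Spec A` is bijective
and all the induced maps of residue fields are isomorphisms. -/
def Subring.IsSubintegralIn {B : Type*} [CommRing B] (A C : Subring B) (h : A ≤ C) : Prop :=
  Function.Bijective (PrimeSpectrum.comap (Subring.inclusion h)) ∧
    ∀ Q : PrimeSpectrum C, Function.Bijective (residueFieldMapOfLE h Q)

/-- A subring `A` of `B` is *seminormal in `B`* if the only subintegral intermediate extension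
`A ⊆ C ⊆ B` is `C = A`. -/
def Subring.IsSeminormalIn {B : Type*} [CommRing B] (A : Subring B) : Prop :=
  ∀ C : Subring B, (h : A ≤ C) → A.IsSubintegralIn C h → C = A

/-!
If `b ^ e, b ^ f ∈ A`, then `b ^ n ∈ A` for all `n ≥ N`, where `N - 1` is the Frobenius number of
`e` and `f`, and `A ⊆ A[b]` is subintegral: at a prime of `A` containing `b ^ N` every element of
`A[b]` is congruent to an element of `A` modulo `b`, while away from it `b ^ N` multiplies `A[b]`
into `A`. Seminormality then forces `A[b] = A`.

Conversely, the condition for `(e, f)` implies the one for `(2, 3)`. Given a subintegral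
extension `A ⊊ C`, let `P` be a minimal prime of the conductor of `A` in `C` and `Q` the only prime
of `C` over `P`. After localizing at `P`, `Q` is the radical of the conductor, so a power of `Q`
lies in `A_P`. Being closed under `x ^ 2, x ^ 3 ↦ x`, `A_P ∩ C` then contains `Q`, and, since
`κ(P) = κ(Q)`, all of `C`. As `C` is a finite `A`-module, the conductor then has an element
outside `P`.
-/

theorem pow_mem_of_pow_mem_of_coprime {M S : Type*} [Monoid M] [SetLike S M] [SubmonoidClass S M]
    {A : S} {x : M} {m n k : ℕ} (hmn : m.Coprime n) (hm : 1 < m) (hn : 1 < n)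
    (hxm : x ^ m ∈ A) (hxn : x ^ n ∈ A) (hk : m * n - m - n < k) : x ^ k ∈ A := by
  obtain ⟨a, b, rfl⟩ := (AddSubmonoid.mem_closure_pair m n k).mp
    ((frobeniusNumber_iff.mp (frobeniusNumber_pair hmn hm hn)).2 k hk)
  rw [pow_add, smul_eq_mul, smul_eq_mul, mul_comm a, mul_comm b, pow_mul, pow_mul]
  exact mul_mem (pow_mem hxm a) (pow_mem hxn b)

def IsSqCubeClosed {M : Type*} [Monoid M] (S : Set M) : Prop :=
  ∀ x, x ^ 2 ∈ S → x ^ 3 ∈ S → x ∈ S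

theorem IsSqCubeClosed.preimage {M N : Type*} [Monoid M] [Monoid N] {S : Set N}
    (hS : IsSqCubeClosed S) (f : M →* N) : IsSqCubeClosed (f ⁻¹' S) := fun x h2 h3 =>
  hS (f x) (by simpa using h2) (by simpa using h3)

theorem isSqCubeClosed_of_pow_mem {M S : Type*} [Monoid M] [SetLike S M] [SubmonoidClass S M]
    {A : S} {e f : ℕ} (he : 2 ≤ e) (hf : 2 ≤ f)
    (H : ∀ x : M, x ^ e ∈ A → x ^ f ∈ A → x ∈ A) : IsSqCubeClosed (A : Set M) := fun x h2 h3 =>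
  H x (pow_mem_of_pow_mem_of_coprime (by norm_num) one_lt_two (by norm_num) h2 h3 (by omega))
    (pow_mem_of_pow_mem_of_coprime (by norm_num) one_lt_two (by norm_num) h2 h3 (by omega))

theorem Ideal.coe_subset_of_pow_subset {R : Type*} [CommSemiring R] {G : Set R}
    (hG : IsSqCubeClosed G) (I : Ideal R) (k : ℕ) (hk : ((I ^ k : Ideal R) : Set R) ⊆ G) :
    (I : Set R) ⊆ G := by
  induction k with
  | zero => exact (Set.subset_univ _).trans (by simpa using hk)
  | succ k ih =>
    cases k with
    | zero => simpa using hk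
    | succ k =>
      refine ih fun x hx => hG x (hk ?_) (hk ?_)
      · exact Ideal.pow_le_pow_right (by omega) (pow_mul I (k + 1) 2 ▸ Ideal.pow_mem_pow hx 2)
      · exact Ideal.pow_le_pow_right (by omega) (pow_mul I (k + 1) 3 ▸ Ideal.pow_mem_pow hx 3)

theorem Ideal.mem_radical_of_forall_isPrime_disjoint {R : Type*} [CommRing R] {I : Ideal R}
    {S : Submonoid R} (hI : ∀ s ∈ S, ∀ x, s * x ∈ I → x ∈ I) {x : R}
    (hx : ∀ J : Ideal R, J.IsPrime → I ≤ J → Disjoint (S : Set R) J → x ∈ J) :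
    x ∈ I.radical := by
  by_contra hxI
  have hdisj : Disjoint (I : Set R) (S ⊔ Submonoid.powers x : Submonoid R) := by
    refine Set.disjoint_right.mpr fun t ht htI => ?_
    obtain ⟨s, hs, _, ⟨n, rfl⟩, rfl⟩ := Submonoid.mem_sup.mp ht
    exact hxI ⟨n, hI s hs _ htI⟩
  obtain ⟨J, hJ, hIJ, hJS⟩ := Ideal.exists_le_prime_disjoint I _ hdisj
  have hxJ := hx J hJ hIJ (hJS.mono_right (SetLike.coe_mono le_sup_left)).symm
  exact Set.disjoint_left.mp hJS hxJ (le_sup_right (a := S) (Submonoid.mem_powers x))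

theorem Submodule.colon_not_le_of_fg {R M : Type*} [CommRing R] [AddCommGroup M] [Module R M]
    {N : Submodule R M} {P : Ideal R} (hP : P.IsPrime) {S : Set M} (hS : (span R S).FG)
    (h : ∀ x ∈ S, ¬ N.colon {x} ≤ P) : ¬ N.colon S ≤ P := by
  obtain ⟨G, hGS, hG⟩ := (fg_span_iff_fg_span_finset_subset S).mp hS
  have hcolon : N.colon S = G.inf fun x => N.colon {x} := by
    rw [← colon_span, hG, colon_span]
    ext r
    simp [mem_colon, Submodule.mem_finsetInf]
  rw [hcolon, hP.inf_le']
  rintro ⟨x, hx, hxP⟩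
  exact h x (hGS hx) hxP

theorem Ideal.ResidueField.exists_algebraMap_div_eq {S : Type*} [CommRing S] (J : Ideal S)
    [J.IsPrime] (z : J.ResidueField) :
    ∃ x t : S, t ∉ J ∧ algebraMap S _ x / algebraMap S _ t = z := by
  obtain ⟨x, t, ht, rfl⟩ := IsFractionRing.div_surjective (A := S ⧸ J) z
  obtain ⟨x, rfl⟩ := Ideal.Quotient.mk_surjective x
  obtain ⟨t, rfl⟩ := Ideal.Quotient.mk_surjective t
  refine ⟨x, t, fun htJ => ?_, rfl⟩
  exact nonZeroDivisors.ne_zero ht (Ideal.Quotient.eq_zero_iff_mem.mpr htJ)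

theorem Ideal.ResidueField.map_surjective_iff {R S : Type*} [CommRing R] [CommRing S]
    {f : R →+* S} (I : Ideal R) [I.IsPrime] (J : Ideal S) [J.IsPrime] (hf : I = J.comap f) :
    Function.Surjective (Ideal.ResidueField.map I J f hf) ↔
      ∀ c : S, ∃ r s : R, s ∉ I ∧ f s * c - f r ∈ J := by
  have hne : ∀ s : R, s ∉ I → algebraMap S J.ResidueField (f s) ≠ 0 := fun s hs hzero =>
    hs (hf ▸ Ideal.mem_comap.mpr (Ideal.algebraMap_residueField_eq_zero.mp hzero))
  constructor
  · intro hsurj c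
    obtain ⟨w, hw⟩ := hsurj (algebraMap S _ c)
    obtain ⟨r, s, hs, rfl⟩ := exists_algebraMap_div_eq I w
    refine ⟨r, s, hs, Ideal.algebraMap_residueField_eq_zero.mp ?_⟩
    rw [map_div₀, map_algebraMap, map_algebraMap, div_eq_iff (hne s hs)] at hw
    rw [map_sub, map_mul, hw, mul_comm, sub_self]
  · intro H
    have hmem : ∀ c : S, algebraMap S _ c ∈ (map I J f hf).fieldRange := by
      intro c
      obtain ⟨r, s, hs, hrs⟩ := H c
      refine ⟨algebraMap R _ r / algebraMap R _ s, ?_⟩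
      rw [map_div₀, map_algebraMap, map_algebraMap, div_eq_iff (hne s hs)]
      have := Ideal.algebraMap_residueField_eq_zero.mpr hrs
      rw [map_sub, map_mul, sub_eq_zero] at this
      rw [← this, mul_comm]
    intro z
    obtain ⟨x, t, -, rfl⟩ := exists_algebraMap_div_eq J z
    exact div_mem (hmem x) (hmem t)

theorem residueFieldMapOfLE_eq {B : Type*} [CommRing B] {A C : Subring B} (h : A ≤ C)
    (Q : PrimeSpectrum C) :
    residueFieldMapOfLE h Q =
      Ideal.ResidueField.map (Q.asIdeal.comap (Subring.inclusion h)) Q.asIdeal _ rfl :=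
  rfl

namespace Subring

variable {B : Type*} [CommRing B] {A C : Subring B}

section

variable (h : A ≤ C)

theorem comap_inclusion_surjective_of_isIntegral (hint : ∀ c ∈ C, IsIntegral A c) :
    Function.Surjective (PrimeSpectrum.comap (inclusion h)) := by
  let _ : Algebra A C := (inclusion h).toAlgebra
  have : Algebra.IsIntegral A C := ⟨fun c =>
    (isIntegral_algHom_iff (⟨C.subtype, fun _ => rfl⟩ : C →ₐ[A] B) Subtype.val_injective).mp
      (hint c c.2)⟩
  intro P
  obtain ⟨Q, -, hQ, hQP⟩ := Ideal.exists_ideal_over_prime_of_isIntegral P.asIdeal ⊥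
    (Ideal.comap_bot_le_of_injective _ (inclusion_injective h))
  exact ⟨⟨Q, hQ⟩, PrimeSpectrum.ext hQP⟩

theorem radical_map_comap_le (Q : PrimeSpectrum C) :
    ((Q.asIdeal.comap (inclusion h)).map (inclusion h)).radical ≤ Q.asIdeal :=
  Q.isPrime.radical_le_iff.mpr Ideal.map_comap_le

variable {h} in
theorem asIdeal_le_of_comap_eq (H : ∀ P : Ideal A, P.IsPrime → ∀ c : C, ∃ r s : A, s ∉ P ∧
      inclusion h s * c - inclusion h r ∈ (P.map (inclusion h)).radical)
    {Q₁ Q₂ : PrimeSpectrum C}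
    (hQ : Q₁.asIdeal.comap (inclusion h) = Q₂.asIdeal.comap (inclusion h)) :
    Q₁.asIdeal ≤ Q₂.asIdeal := by
  intro c hc
  obtain ⟨r, s, hs, hrs⟩ := H (Q₁.asIdeal.comap (inclusion h)) inferInstance c
  have hr : inclusion h r ∈ Q₂.asIdeal := by
    refine Ideal.mem_comap.mp (hQ ▸ Ideal.mem_comap.mpr ?_)
    exact (Submodule.sub_mem_iff_right _ (Q₁.asIdeal.mul_mem_left _ hc)).mp
      (radical_map_comap_le h Q₁ hrs)
  have hsc : inclusion h s * c ∈ Q₂.asIdeal :=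
    (Submodule.sub_mem_iff_left _ hr).mp (radical_map_comap_le h Q₂ (hQ ▸ hrs))
  exact (Q₂.isPrime.mem_or_mem hsc).resolve_left fun hs' => hs (hQ ▸ hs')

theorem isSubintegralIn_of_sub_mem_radical (hint : ∀ c ∈ C, IsIntegral A c)
    (H : ∀ P : Ideal A, P.IsPrime → ∀ c : C, ∃ r s : A, s ∉ P ∧
      inclusion h s * c - inclusion h r ∈ (P.map (inclusion h)).radical) :
    A.IsSubintegralIn C h := by
  refine ⟨⟨fun Q₁ Q₂ hQ => ?_, comap_inclusion_surjective_of_isIntegral h hint⟩, fun Q => ?_⟩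
  · have hP := congrArg PrimeSpectrum.asIdeal hQ
    exact PrimeSpectrum.ext
      (le_antisymm (asIdeal_le_of_comap_eq H hP) (asIdeal_le_of_comap_eq H hP.symm))
  · refine ⟨RingHom.injective _, ?_⟩
    rw [residueFieldMapOfLE_eq, Ideal.ResidueField.map_surjective_iff]
    intro c
    obtain ⟨r, s, hs, hrs⟩ := H (Q.asIdeal.comap (inclusion h)) inferInstance c
    exact ⟨r, s, hs, radical_map_comap_le h Q hrs⟩

end

variable {b : B}

theorem le_adjoin_toSubring (A : Subring B) (s : Set B) : A ≤ (Algebra.adjoin A s).toSubring :=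
  fun a ha => (Algebra.adjoin A s).algebraMap_mem (⟨a, ha⟩ : A)

theorem pow_mul_mem_of_mem_adjoin {N : ℕ} (hN : ∀ n ≥ N, b ^ n ∈ A) {c : B}
    (hc : c ∈ Algebra.adjoin A {b}) : b ^ N * c ∈ A := by
  obtain ⟨p, rfl⟩ := (AlgHom.mem_range _).mp (Algebra.adjoin_singleton_eq_range_aeval A b ▸ hc)
  clear hc
  induction p using Polynomial.induction_on' with
  | add p q hp hq => rw [map_add, mul_add]; exact add_mem hp hq
  | monomial n a =>
    rw [Polynomial.aeval_monomial, mul_left_comm, ← pow_add]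
    exact mul_mem a.2 (hN _ (Nat.le_add_right N n))

theorem exists_eq_add_mul_of_mem_adjoin {c : B} (hc : c ∈ Algebra.adjoin A {b}) :
    ∃ a ∈ A, ∃ c' ∈ Algebra.adjoin A {b}, c = a + b * c' := by
  rw [Algebra.adjoin_singleton_eq_range_aeval] at hc ⊢
  obtain ⟨p, rfl⟩ := (AlgHom.mem_range _).mp hc
  refine ⟨p.coeff 0, (p.coeff 0).2, Polynomial.aeval b p.divX, AlgHom.mem_range_self _ _, ?_⟩
  have hp := congrArg (Polynomial.aeval b) (Polynomial.divX_mul_X_add p)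
  rw [map_add, map_mul, Polynomial.aeval_X, Polynomial.aeval_C] at hp
  rw [← hp, add_comm, mul_comm]
  rfl

theorem isSubintegralIn_adjoin {N : ℕ} (hN : ∀ n ≥ N, b ^ n ∈ A) :
    A.IsSubintegralIn _ (le_adjoin_toSubring A {b}) := by
  set h := le_adjoin_toSubring A {b}
  have hb : IsIntegral A b :=
    IsIntegral.of_pow N.succ_pos (isIntegral_algebraMap (x := (⟨_, hN _ N.le_succ⟩ : A)))
  refine isSubintegralIn_of_sub_mem_radical h
    (fun c hc => Algebra.adjoin_le (S := integralClosure A B) (Set.singleton_subset_iff.mpr hb) hc)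
    fun P hP c => ?_
  let bC : (Algebra.adjoin A {b}).toSubring := ⟨b, Algebra.subset_adjoin rfl⟩
  let bN : A := ⟨b ^ N, hN N le_rfl⟩
  by_cases hbN : bN ∈ P
  · obtain ⟨a, ha, c', hc', hcc'⟩ := exists_eq_add_mul_of_mem_adjoin c.2
    refine ⟨⟨a, ha⟩, 1, hP.one_notMem, ?_⟩
    have hbC : bC ∈ (P.map (inclusion h)).radical := ⟨N, Ideal.mem_map_of_mem _ hbN⟩
    have : inclusion h 1 * c - inclusion h ⟨a, ha⟩ = bC * ⟨c', hc'⟩ :=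
      Subtype.ext (by simp [hcc', bC])
    rw [this]
    exact Ideal.mul_mem_right _ _ hbC
  · refine ⟨⟨b ^ N * c, pow_mul_mem_of_mem_adjoin hN c.2⟩, bN, hbN, ?_⟩
    convert Ideal.zero_mem _
    exact Subtype.ext (sub_self _)

theorem IsSeminormalIn.mem_of_pow_mem (hA : A.IsSeminormalIn) {e f : ℕ} (hef : e.Coprime f)
    (he : 1 < e) (hf : 1 < f) {b : B} (hbe : b ^ e ∈ A) (hbf : b ^ f ∈ A) : b ∈ A := by
  have hN : ∀ n ≥ e * f - e - f + 1, b ^ n ∈ A := fun _ hn =>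
    pow_mem_of_pow_mem_of_coprime hef he hf hbe hbf hn
  rw [← hA _ _ (isSubintegralIn_adjoin hN)]
  exact Algebra.subset_adjoin rfl

def conductor (A C : Subring B) : Ideal A := (1 : Submodule A B).colon C

theorem mem_conductor {a : A} : a ∈ A.conductor C ↔ ∀ c ∈ C, (a : B) * c ∈ A := by
  simp [conductor, Submodule.mem_colon, Submodule.mem_one, Algebra.smul_def,
    Algebra.algebraMap_ofSubsemiring_apply]

/-- Models `B ∩ A_S`. -/
def localizedAt (A : Subring B) (S : Submonoid A) : Set B :=
  {x | ∃ s ∈ S, (s : B) * x ∈ A}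

theorem mem_localizedAt_iff_colon_not_le {P : Ideal A} [P.IsPrime] {x : B} :
    x ∈ A.localizedAt P.primeCompl ↔ ¬ (1 : Submodule A B).colon {x} ≤ P := by
  simp [localizedAt, SetLike.not_le_iff_exists, Submodule.mem_colon_singleton, Submodule.mem_one,
    Algebra.smul_def, Algebra.algebraMap_ofSubsemiring_apply, and_comm]

theorem _root_.IsSqCubeClosed.localizedAt (hA : IsSqCubeClosed (A : Set B)) (S : Submonoid A) :
    IsSqCubeClosed (A.localizedAt S) := by
  rintro x ⟨s, hs, hsx⟩ ⟨t, ht, htx⟩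
  refine ⟨s * t, mul_mem hs ht, hA _ ?_ ?_⟩
  · have : ((s * t : A) * x) ^ 2 = (s * x ^ 2) * (s * t ^ 2 : A) := by push_cast; ring
    rw [SetLike.mem_coe, this]
    exact mul_mem hsx (SetLike.coe_mem _)
  · have : ((s * t : A) * x) ^ 3 = (t * x ^ 3) * (s ^ 3 * t ^ 2 : A) := by push_cast; ring
    rw [SetLike.mem_coe, this]
    exact mul_mem htx (SetLike.coe_mem _)

/-- The preimage in `C` of the conductor of `A_S` in `C_S`. -/
def localizedConductor (A C : Subring B) (S : Submonoid A) : Ideal C where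
  carrier := {z | ∃ s ∈ S, ∀ c ∈ C, (s : B) * z * c ∈ A}
  zero_mem' := ⟨1, one_mem S, fun c _ => by simp⟩
  add_mem' := by
    rintro z w ⟨s, hs, hz⟩ ⟨t, ht, hw⟩
    refine ⟨s * t, mul_mem hs ht, fun c hc => ?_⟩
    have : ((s * t : A) : B) * ↑(z + w) * c = t * (s * z * c) + s * (t * w * c) := by
      push_cast; ring
    rw [this]
    exact add_mem (mul_mem t.2 (hz c hc)) (mul_mem s.2 (hw c hc))
  smul_mem' := by
    rintro d z ⟨s, hs, hz⟩
    refine ⟨s, hs, fun c hc => ?_⟩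
    have : (s : B) * ↑(d • z) * c = s * z * (d * c) := by rw [smul_eq_mul]; push_cast; ring
    rw [this]
    exact hz _ (mul_mem d.2 hc)

theorem coe_mem_localizedAt_of_mem_localizedConductor {S : Submonoid A} {z : C}
    (hz : z ∈ A.localizedConductor C S) : (z : B) ∈ A.localizedAt S := by
  obtain ⟨s, hs, hsz⟩ := hz
  exact ⟨s, hs, by simpa using hsz 1 C.one_mem⟩

theorem conductor_le_comap_localizedConductor (h : A ≤ C) (S : Submonoid A) :
    A.conductor C ≤ (A.localizedConductor C S).comap (inclusion h) := fun a ha =>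
  ⟨1, one_mem S, fun c hc => by simpa using mem_conductor.mp ha c hc⟩

theorem mem_localizedConductor_of_mul_mem (h : A ≤ C) {S : Submonoid A} {s : A} (hs : s ∈ S)
    {z : C} (hsz : inclusion h s * z ∈ A.localizedConductor C S) :
    z ∈ A.localizedConductor C S := by
  obtain ⟨t, ht, htz⟩ := hsz
  exact ⟨t * s, mul_mem ht hs, fun c hc => by simpa [mul_assoc] using htz c hc⟩

theorem le_radical_localizedConductor (h : A ≤ C)
    (hinj : Function.Injective (PrimeSpectrum.comap (inclusion h))) {P : Ideal A} [P.IsPrime]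
    (hP : P ∈ (A.conductor C).minimalPrimes) {Q : PrimeSpectrum C}
    (hQ : Q.asIdeal.comap (inclusion h) = P) :
    Q.asIdeal ≤ (A.localizedConductor C P.primeCompl).radical := by
  intro q hq
  refine Ideal.mem_radical_of_forall_isPrime_disjoint (S := P.primeCompl.map (inclusion h))
    ?_ fun J hJ hIJ hJS => ?_
  · rintro _ ⟨s, hs, rfl⟩ z hsz
    exact mem_localizedConductor_of_mul_mem h hs hsz
  · have hJP : J.comap (inclusion h) ≤ P := fun a haJ => by
      by_contra haP
      exact Set.disjoint_left.mp hJS ⟨a, haP, rfl⟩ haJ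
    have hJP : J.comap (inclusion h) = P := le_antisymm hJP <| hP.2
      ⟨Ideal.comap_isPrime _ _, (conductor_le_comap_localizedConductor h _).trans
        (Ideal.comap_mono hIJ)⟩ hJP
    have hJQ : (⟨J, hJ⟩ : PrimeSpectrum C) = Q := hinj (PrimeSpectrum.ext (hJP.trans hQ.symm))
    rwa [← hJQ] at hq

theorem not_conductor_le_of_subset_localizedAt [IsNoetherian A B] {P : Ideal A} [hP : P.IsPrime]
    (hC : (C : Set B) ⊆ A.localizedAt P.primeCompl) : ¬ A.conductor C ≤ P :=
  Submodule.colon_not_le_of_fg hP (IsNoetherian.noetherian _) fun _ hx =>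
    mem_localizedAt_iff_colon_not_le.mp (hC hx)

theorem isNoetherianRing_of_le [IsNoetherianRing A] [Module.Finite A B] (h : A ≤ C) :
    IsNoetherianRing C := by
  let _ : Algebra A C := (inclusion h).toAlgebra
  have : IsNoetherian A C := isNoetherian_of_injective
    (⟨C.subtype, fun _ => rfl⟩ : C →ₐ[A] B).toLinearMap Subtype.val_injective
  exact isNoetherian_of_tower A this

theorem asIdeal_subset_localizedAt [IsNoetherianRing C] (hA : IsSqCubeClosed (A : Set B))
    (h : A ≤ C) (hinj : Function.Injective (PrimeSpectrum.comap (inclusion h))) {P : Ideal A}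
    [P.IsPrime] (hP : P ∈ (A.conductor C).minimalPrimes) {Q : PrimeSpectrum C}
    (hQ : Q.asIdeal.comap (inclusion h) = P) :
    ∀ q ∈ Q.asIdeal, (q : B) ∈ A.localizedAt P.primeCompl := by
  obtain ⟨k, hk⟩ := Ideal.exists_pow_le_of_le_radical_of_fg
    (le_radical_localizedConductor h hinj hP hQ) (IsNoetherian.noetherian _)
  exact Ideal.coe_subset_of_pow_subset ((hA.localizedAt _).preimage C.subtype.toMonoidHom) _ k
    fun _ hz => coe_mem_localizedAt_of_mem_localizedConductor (hk hz)

theorem coe_subset_localizedAt (h : A ≤ C) {P : Ideal A} [P.IsPrime] {Q : PrimeSpectrum C}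
    (hQ : Q.asIdeal.comap (inclusion h) = P)
    (hres : Function.Surjective (residueFieldMapOfLE h Q))
    (hQloc : ∀ q ∈ Q.asIdeal, (q : B) ∈ A.localizedAt P.primeCompl) :
    (C : Set B) ⊆ A.localizedAt P.primeCompl := by
  intro c hc
  rw [residueFieldMapOfLE_eq, Ideal.ResidueField.map_surjective_iff] at hres
  obtain ⟨r, s, hs, hrs⟩ := hres ⟨c, hc⟩
  obtain ⟨t, ht, htrs⟩ := hQloc _ hrs
  refine ⟨t * s, mul_mem ht (hQ ▸ hs), ?_⟩
  have : ((t * s : A) : B) * c = t * ↑(inclusion h s * ⟨c, hc⟩ - inclusion h r) + t * r := by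
    push_cast [coe_inclusion]; ring
  rw [this]
  exact add_mem htrs (mul_mem t.2 r.2)

theorem isSeminormalIn_of_isSqCubeClosed [IsNoetherianRing A] [Module.Finite A B]
    (hA : IsSqCubeClosed (A : Set B)) : A.IsSeminormalIn := by
  intro C h ⟨⟨hinj, hsurj⟩, hres⟩
  by_contra hCA
  have hc : A.conductor C ≠ ⊤ := fun htop => hCA <| le_antisymm (fun c hc => by
    simpa using mem_conductor.mp (htop ▸ Submodule.mem_top : (1 : A) ∈ A.conductor C) c hc) h
  obtain ⟨P, hP⟩ := Ideal.nonempty_minimalPrimes hc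
  have := hP.1.1
  obtain ⟨Q, hQ⟩ := hsurj ⟨P, this⟩
  have hQP : Q.asIdeal.comap (inclusion h) = P := congrArg PrimeSpectrum.asIdeal hQ
  have := isNoetherianRing_of_le h
  have hC := coe_subset_localizedAt h hQP (hres Q).2 (asIdeal_subset_localizedAt hA h hinj hP hQP)
  exact not_conductor_le_of_subset_localizedAt hC hP.1.2

end Subring

theorem seminormalIn_iff_pow_general {B : Type*} [CommRing B]
    (A : Subring B) [IsNoetherianRing A]
    [Module.Finite A B]
    (e f : ℕ) (hf : 1 < f) (hef : f < e) (hcop : Nat.Coprime e f) :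
    A.IsSeminormalIn ↔ ∀ b : B, b ^ e ∈ A → b ^ f ∈ A → b ∈ A :=
  ⟨fun hA _ => hA.mem_of_pow_mem hcop (hf.trans hef) hf,
    fun H => Subring.isSeminormalIn_of_isSqCubeClosed (isSqCubeClosed_of_pow_mem (by omega) hf H)⟩

/-- **Hamann/Swan's criterion.**  Let `A ⊆ B` be a finite integral extension of reduced
Noetherian rings and let `e > f > 1` be relatively prime integers.  Then `A` is seminormal in
`B` if and only if every `b ∈ B` with `b ^ e ∈ A` and `b ^ f ∈ A` lies in `A`. -/
theorem seminormalIn_iff_pow {B : Type*} [CommRing B] [IsReduced B] [IsNoetherianRing B]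
    (A : Subring B) [IsNoetherianRing A] [IsReduced A]
    [Module.Finite A B] [Algebra.IsIntegral A B]
    (e f : ℕ) (hf : 1 < f) (hef : f < e) (hcop : Nat.Coprime e f) :
    A.IsSeminormalIn ↔ ∀ b : B, b ^ e ∈ A → b ^ f ∈ A → b ∈ A :=
  seminormalIn_iff_pow_general A e f hf hef hcop
end
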